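/- Let R be a finite local ring of odd characteristic, n a positive integer, and β a non-degenerate symmetric bilinear form on Rⁿ with associated matrix B. Then there exist an invertible n×n matrix P over R and an element u ∈ R, where either u = 1 or u is a non-square unit of R, such that Pᵀ B P is the diagonal matrix with diagonal entries d₁, …, dₙ given by dᵢ = (−1)^{i+1} for i < n and dₙ = (−1)^{n+1}·u. (Equivalently, β is equivalent to x₁y₁ − x₂y₂ + ⋯ − x_{n−1}y_{n−1} + u·xₙyₙ when n is odd, and to x₁y₁ − x₂y₂ + ⋯ + x_{n−1}y_{n−1} − u·xₙyₙ when n is even.) -/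

import Mathlib

/-!
Since `2` is a unit, a nondegenerate symmetric matrix over a local ring acquires a unit diagonal
entry after a congruence (if every `B i i` lies in the maximal ideal, a unit `B i j` makes
`eᵢ + eⱼ` of unit length), and splitting that entry off by a Schur complement diagonalises the
form with unit entries. Over the residue field, of odd order, every unit is of the form
`a x² + b y²`; as squaring is a bijection of `1 + 𝔪`, this lifts to `R`. For such `x, y` the
vectors `x eᵢ + y eⱼ` and `b y eᵢ - a x eⱼ` turn `diag(a, b)` into `diag(c, abc)`, so all
diagonal entries but the last can be made `(-1)^i`, and the last one is then normalised modulo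
squares.
-/

open Matrix Polynomial IsLocalRing

theorem isUnit_two_of_odd_ringChar {R : Type*} [CommRing R] (h : Odd (ringChar R)) :
    IsUnit (2 : R) := by
  obtain ⟨t, ht⟩ := h
  have hchar : (2 * t + 1 : R) = 0 := by exact_mod_cast ht ▸ ringChar.Nat.cast_ringChar
  exact IsUnit.of_mul_eq_one (-t) (by linear_combination -hchar)

theorem FiniteField.exists_mul_sq_add_mul_sq_eq {F : Type*} [Field F] [Finite F]
    (h2 : (2 : F) ≠ 0) {a b : F} (ha : a ≠ 0) (hb : b ≠ 0) (c : F) :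
    ∃ x y, a * x ^ 2 + b * y ^ 2 = c := by
  have := Fintype.ofFinite F
  have hchar : ringChar F ≠ 2 := fun h => h2 (by exact_mod_cast h ▸ ringChar.Nat.cast_ringChar)
  have hf : (C a * X ^ 2 - C c).degree = 2 := by
    rw [degree_sub_C] <;> rw [degree_C_mul_X_pow 2 ha] <;> norm_num
  obtain ⟨x, y, hxy⟩ := exists_root_sum_quadratic hf (degree_C_mul_X_pow 2 hb)
    (odd_card_of_char_ne_two hchar)
  simp only [eval_sub, eval_mul, eval_C, eval_pow, eval_X] at hxy
  exact ⟨x, y, by linear_combination hxy⟩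

namespace IsLocalRing

variable {R : Type*} [CommRing R] [IsLocalRing R] [Finite R]

theorem exists_sq_eq_of_residue_eq_one (h2 : IsUnit (2 : R)) {w : R}
    (hw : residue R w = 1) : ∃ s, s ^ 2 = w := by
  let S := {x : R | residue R x = 1}
  have hmaps : Set.MapsTo (· ^ 2) S S := fun x (hx : residue R x = 1) => by
    simp [S, hx]
  have hinj : Set.InjOn (· ^ 2) S := by
    intro x (hx : residue R x = 1) y (hy : residue R y = 1) hxy
    have hunit : IsUnit (x + y) := by
      rw [← residue_ne_zero_iff_isUnit, map_add, hx, hy, one_add_one_eq_two,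
        ← map_ofNat (residue R) 2, residue_ne_zero_iff_isUnit]
      exact h2
    have : (x + y) * (x - y) = 0 := by linear_combination hxy
    exact sub_eq_zero.mp (hunit.mul_right_eq_zero.mp this)
  obtain ⟨s, -, hs⟩ := ((S.toFinite.injOn_iff_bijOn_of_mapsTo hmaps).mp hinj).surjOn hw
  exact ⟨s, hs⟩

theorem exists_mul_sq_add_mul_sq_eq (h2 : IsUnit (2 : R)) {a b c : R} (ha : IsUnit a)
    (hb : IsUnit b) (hc : IsUnit c) : ∃ x y, a * x ^ 2 + b * y ^ 2 = c := by
  have : Finite (ResidueField R) := .of_surjective _ residue_surjective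
  obtain ⟨x₀, y₀, h₀⟩ := FiniteField.exists_mul_sq_add_mul_sq_eq
    (by rw [← map_ofNat (residue R) 2]; exact (residue_ne_zero_iff_isUnit _).mpr h2)
    ((residue_ne_zero_iff_isUnit _).mpr ha) ((residue_ne_zero_iff_isUnit _).mpr hb) (residue R c)
  obtain ⟨x, rfl⟩ := residue_surjective x₀
  obtain ⟨y, rfl⟩ := residue_surjective y₀
  obtain ⟨c', hcc'⟩ := hc.exists_right_inv
  have hw : residue R ((a * x ^ 2 + b * y ^ 2) * c') = 1 := by
    rw [map_mul, map_add, map_mul, map_mul, map_pow, map_pow, h₀, ← map_mul, hcc', map_one]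
  obtain ⟨s, hs⟩ := exists_sq_eq_of_residue_eq_one h2 hw
  have hsu : IsUnit s := by
    rw [← isUnit_pow_iff two_ne_zero, hs, ← residue_ne_zero_iff_isUnit, hw]
    exact one_ne_zero
  obtain ⟨s', hss'⟩ := hsu.exists_right_inv
  refine ⟨x * s', y * s', ?_⟩
  linear_combination (-((a * x ^ 2 + b * y ^ 2) * s' ^ 2)) * hcc' - (c * s' ^ 2) * hs +
    c * (s * s' + 1) * hss'

end IsLocalRing

namespace Matrix

variable {ι κ R : Type*} [Fintype ι] [DecidableEq ι] [Fintype κ] [DecidableEq κ] [CommRing R]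

def Congruent (A B : Matrix ι ι R) : Prop :=
  ∃ P : Matrix ι ι R, IsUnit P.det ∧ Pᵀ * A * P = B

namespace Congruent

theorem refl (A : Matrix ι ι R) : Congruent A A := ⟨1, by simp, by simp⟩

theorem trans {A B C : Matrix ι ι R} (hAB : Congruent A B) (hBC : Congruent B C) :
    Congruent A C := by
  obtain ⟨P, hP, rfl⟩ := hAB
  obtain ⟨Q, hQ, rfl⟩ := hBC
  exact ⟨P * Q, by simpa using hP.mul hQ, by simp [Matrix.mul_assoc]⟩

theorem isSymm {A B : Matrix ι ι R} (h : Congruent A B) (hA : A.IsSymm) : B.IsSymm := by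
  obtain ⟨P, -, rfl⟩ := h
  simp [IsSymm, hA.eq, Matrix.mul_assoc]

theorem isUnit_det {A B : Matrix ι ι R} (h : Congruent A B) (hA : IsUnit A.det) :
    IsUnit B.det := by
  obtain ⟨P, hP, rfl⟩ := h
  simpa using (hP.mul hA).mul hP

theorem of_transpose_mul_mul_eq {A B P : Matrix ι ι R} (hB : IsUnit B.det)
    (h : Pᵀ * A * P = B) : Congruent A B := by
  refine ⟨P, ?_, h⟩
  rw [← h, det_mul, det_mul, det_transpose] at hB
  exact isUnit_of_mul_isUnit_right hB

theorem reindex {A B : Matrix ι ι R} (e : ι ≃ κ) (h : Congruent A B) :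
    Congruent (Matrix.reindex e e A) (Matrix.reindex e e B) := by
  obtain ⟨P, hP, rfl⟩ := h
  refine ⟨Matrix.reindex e e P, by simpa using hP, ?_⟩
  simp [reindex_apply, transpose_submatrix, submatrix_mul_equiv]

theorem fromBlocks {A A' : Matrix ι ι R} {D D' : Matrix κ κ R} (hA : Congruent A A')
    (hD : Congruent D D') : Congruent (fromBlocks A 0 0 D) (fromBlocks A' 0 0 D') := by
  obtain ⟨P, hP, rfl⟩ := hA
  obtain ⟨Q, hQ, rfl⟩ := hD
  refine ⟨Matrix.fromBlocks P 0 0 Q, by simpa using hP.mul hQ, ?_⟩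
  simp [fromBlocks_transpose, fromBlocks_multiply]

end Congruent

theorem isUnit_det_diagonal_iff {d : ι → R} : IsUnit (diagonal d).det ↔ ∀ i, IsUnit (d i) := by
  simp

theorem congruent_diagonal_update_mul_mul (d : ι → R) (i : ι) {t : R} (ht : IsUnit t) :
    Congruent (diagonal d) (diagonal (Function.update d i (t * d i * t))) := by
  refine ⟨diagonal (Function.update 1 i t), ?_, ?_⟩
  · rw [det_diagonal, IsUnit.prod_univ_iff]
    intro k
    rcases eq_or_ne k i with rfl | hk <;> simp [*]
  · ext k l
    rcases eq_or_ne k l with rfl | hkl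
    · rcases eq_or_ne k i with rfl | hk <;> simp [*]
    · simp [hkl]

theorem congruent_diagonal_update_update {d : ι → R} (hd : ∀ k, IsUnit (d k)) {i j : ι}
    (hij : i ≠ j) {x y c : R} (hc : IsUnit c) (h : d i * x ^ 2 + d j * y ^ 2 = c) :
    Congruent (diagonal d)
      (diagonal (Function.update (Function.update d i c) j (d i * d j * c))) := by
  let v : ι → ι → R := fun k => if k = i then Pi.single i x + Pi.single j y else
    if k = j then Pi.single i (d j * y) - Pi.single j (d i * x) else Pi.single k 1
  refine .of_transpose_mul_mul_eq (P := (of v)ᵀ) ?_ ?_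
  · rw [isUnit_det_diagonal_iff]
    intro k
    rcases eq_or_ne k j with rfl | hkj
    · simpa using ((hd i).mul (hd k)).mul hc
    rcases eq_or_ne k i with rfl | hki <;> simp [*]
  have tri : ∀ k, k = i ∨ k = j ∨ (k ≠ i ∧ k ≠ j) := by tauto
  ext k l
  rw [transpose_transpose, mul_apply]
  simp only [mul_diagonal, transpose_apply, of_apply, diagonal_apply, v]
  rcases tri k with rfl | rfl | ⟨hki, hkj⟩ <;> rcases tri l with rfl | rfl | ⟨hli, hlj⟩ <;>
    simp [hij.symm, Pi.single_apply, Finset.sum_add_distrib, add_mul, mul_add, sub_mul, mul_sub,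
      Finset.sum_sub_distrib, ite_mul, mul_ite, *] <;>
    grind

theorem congruent_fromBlocks_schur {A : Matrix ι ι R} {B : Matrix ι κ R} {C : Matrix κ ι R}
    {D : Matrix κ κ R} (hM : (Matrix.fromBlocks A B C D).IsSymm) (hD : IsUnit D.det) :
    Congruent (Matrix.fromBlocks A B C D) (Matrix.fromBlocks (A - B * D⁻¹ * C) 0 0 D) := by
  obtain ⟨-, rfl, -, hDsymm⟩ := isSymm_fromBlocks_iff.mp hM
  refine ⟨Matrix.fromBlocks 1 0 (-(D⁻¹ * Bᵀ)) 1, by simp, ?_⟩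
  have hDinv : (D⁻¹)ᵀ = D⁻¹ := by rw [transpose_nonsing_inv, hDsymm.eq]
  simp [fromBlocks_transpose, fromBlocks_multiply, hDinv, Matrix.mul_assoc,
    nonsing_inv_mul _ hD, mul_nonsing_inv_cancel_left _ _ hD, sub_eq_add_neg]

section IsLocalRing

variable [IsLocalRing R]

theorem exists_isUnit_apply_of_isUnit_det [Nonempty ι] {A : Matrix ι ι R} (h : IsUnit A.det) :
    ∃ i j, IsUnit (A i j) := by
  by_contra! hA
  have hres : (residue R).mapMatrix A = 0 := by
    ext i j
    simpa [residue_eq_zero_iff] using hA i j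
  have := (residue_ne_zero_iff_isUnit _).mpr h
  rw [RingHom.map_det, hres, det_zero] at this
  exact this rfl

theorem exists_congruent_isUnit_apply_self [Nonempty ι] (h2 : IsUnit (2 : R))
    {A : Matrix ι ι R} (hA : A.IsSymm) (hdet : IsUnit A.det) :
    ∃ A', Congruent A A' ∧ ∃ i, IsUnit (A' i i) := by
  obtain ⟨i, j, hij⟩ := exists_isUnit_apply_of_isUnit_det hdet
  by_cases hdiag : ∃ k, IsUnit (A k k)
  · exact ⟨A, .refl A, hdiag⟩
  push Not at hdiag
  have hne : i ≠ j := by rintro rfl; exact hdiag i hij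
  let T := transvection j i (1 : R)
  refine ⟨Tᵀ * A * T, ⟨T, by simp [T, det_transvection_of_ne _ _ hne.symm], rfl⟩, i, ?_⟩
  have hentry : (Tᵀ * A * T) i i = 2 * A i j + (A i i + A j j) := by
    simp [T, transvection, Matrix.add_mul, Matrix.mul_add, hA.apply i j]
    ring
  have hres : ∀ k, residue R (A k k) = 0 := fun k => (residue_eq_zero_iff _).mpr (hdiag k)
  rw [hentry, ← residue_ne_zero_iff_isUnit, map_add, map_add, hres, hres, add_zero, add_zero,
    residue_ne_zero_iff_isUnit]
  exact h2.mul hij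

theorem exists_congruent_diagonal (h2 : IsUnit (2 : R)) {A : Matrix ι ι R} (hA : A.IsSymm)
    (hdet : IsUnit A.det) : ∃ d : ι → R, Congruent A (diagonal d) := by
  induction hcard : Fintype.card ι generalizing ι with
  | zero =>
    have := Fintype.card_eq_zero_iff.mp hcard
    exact ⟨0, Subsingleton.elim A (diagonal 0) ▸ .refl _⟩
  | succ n ih =>
    have : Nonempty ι := Fintype.card_pos_iff.mp (by omega)
    obtain ⟨A', hAA', i, hi⟩ := exists_congruent_isUnit_apply_self h2 hA hdet
    let e : {k // k ≠ i} ⊕ Unit ≃ ι :=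
      (Equiv.optionEquivSumPUnit _).symm.trans (Equiv.optionSubtypeNe i)
    set M := reindex e.symm e.symm A' with hM
    have hMsymm : (fromBlocks M.toBlocks₁₁ M.toBlocks₁₂ M.toBlocks₂₁ M.toBlocks₂₂).IsSymm := by
      rw [fromBlocks_toBlocks]; exact (hAA'.isSymm hA).submatrix _
    have hD : M.toBlocks₂₂ = diagonal fun _ => A' i i := by
      ext ⟨⟩ ⟨⟩; rfl
    have hDdet : IsUnit M.toBlocks₂₂.det := by simp [hD, hi]
    have hschur := congruent_fromBlocks_schur hMsymm hDdet
    rw [fromBlocks_toBlocks] at hschur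
    set S := M.toBlocks₁₁ - M.toBlocks₁₂ * M.toBlocks₂₂⁻¹ * M.toBlocks₂₁
    have hS : S.IsSymm ∧ IsUnit S.det := by
      have hsymm := hschur.isSymm ((hAA'.isSymm hA).submatrix _)
      have hdet' := hschur.isUnit_det (by simp [hM, hAA'.isUnit_det hdet])
      rw [det_fromBlocks_zero₂₁] at hdet'
      exact ⟨(isSymm_fromBlocks_iff.mp hsymm).1, isUnit_of_mul_isUnit_left hdet'⟩
    have hcard' : Fintype.card {k // k ≠ i} = n := by
      simp [hcard]
    obtain ⟨d, hd⟩ := ih hS.1 hS.2 hcard'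
    refine ⟨Sum.elim d (fun _ => A' i i) ∘ e.symm, hAA'.trans ?_⟩
    have := (hschur.trans (hd.fromBlocks (.refl M.toBlocks₂₂))).reindex e
    rw [hD, fromBlocks_diagonal] at this
    simpa [hM, submatrix_diagonal_equiv] using this

theorem exists_congruent_diagonal_update [Finite R] (h2 : IsUnit (2 : R)) {A : Matrix ι ι R}
    (hA : A.IsSymm) (hdet : IsUnit A.det) {s : ι → R} (hs : ∀ k, IsUnit (s k)) (i₀ : ι) :
    ∃ e, Congruent A (diagonal (Function.update s i₀ e)) := by
  suffices ∀ S : Finset ι, i₀ ∉ S → ∃ d, (∀ k ∈ S, d k = s k) ∧ Congruent A (diagonal d) by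
    obtain ⟨d, hds, hd⟩ := this (Finset.univ.erase i₀) (Finset.notMem_erase i₀ _)
    refine ⟨d i₀, ?_⟩
    convert hd using 2
    funext k
    rcases eq_or_ne k i₀ with rfl | hk
    · simp
    · simp [hk, hds k (Finset.mem_erase.mpr ⟨hk, Finset.mem_univ k⟩)]
  intro S
  induction S using Finset.induction_on with
  | empty =>
    intro _
    obtain ⟨d, hd⟩ := exists_congruent_diagonal h2 hA hdet
    exact ⟨d, by simp, hd⟩
  | insert k S hkS ih =>
    intro hi₀
    obtain ⟨d, hds, hd⟩ := ih (fun h => hi₀ (Finset.mem_insert_of_mem h))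
    have hki₀ : k ≠ i₀ := fun h => hi₀ (h ▸ Finset.mem_insert_self k S)
    have hdu := isUnit_det_diagonal_iff.mp (hd.isUnit_det hdet)
    obtain ⟨x, y, hxy⟩ := exists_mul_sq_add_mul_sq_eq h2 (hdu k) (hdu i₀) (hs k)
    refine ⟨_, ?_, hd.trans (congruent_diagonal_update_update hdu hki₀ (hs k) hxy)⟩
    intro m hm
    rcases Finset.mem_insert.mp hm with rfl | hm
    · simp [hki₀]
    · have hmk : m ≠ k := fun h => hkS (h ▸ hm)
      have hmi₀ : m ≠ i₀ := fun h => hi₀ (Finset.mem_insert_of_mem (h ▸ hm))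
      simp [hmk, hmi₀, hds m hm]

theorem exists_congruent_diagonal_update_mul [Finite R] (h2 : IsUnit (2 : R))
    {A : Matrix ι ι R} (hA : A.IsSymm) (hdet : IsUnit A.det) {s : ι → R}
    (hs : ∀ k, IsUnit (s k)) (i₀ : ι) :
    ∃ u, (u = 1 ∨ (IsUnit u ∧ ¬ ∃ r : R, r ^ 2 = u)) ∧
      Congruent A (diagonal (Function.update s i₀ (s i₀ * u))) := by
  obtain ⟨e, he⟩ := exists_congruent_diagonal_update h2 hA hdet hs i₀
  obtain ⟨w, hw⟩ := (hs i₀).exists_left_inv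
  have hwe : IsUnit (w * e) := (IsUnit.of_mul_eq_one _ hw).mul
    (by simpa using isUnit_det_diagonal_iff.mp (he.isUnit_det hdet) i₀)
  by_cases hsq : ∃ r : R, r ^ 2 = w * e
  · obtain ⟨r, hr⟩ := hsq
    obtain ⟨v, hrv⟩ := ((isUnit_pow_iff two_ne_zero).mp (hr ▸ hwe)).exists_right_inv
    refine ⟨1, .inl rfl, he.trans ?_⟩
    have hscale : v * e * v = s i₀ * 1 := by
      linear_combination (-(v ^ 2 * e)) * hw - (s i₀ * v ^ 2) * hr + s i₀ * (r * v + 1) * hrv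
    simpa [hscale] using congruent_diagonal_update_mul_mul (Function.update s i₀ e) i₀
      (IsUnit.of_mul_eq_one_right _ hrv)
  · refine ⟨w * e, .inr ⟨hwe, hsq⟩, ?_⟩
    rwa [← mul_assoc, mul_comm (s i₀), hw, one_mul]

end IsLocalRing

end Matrix

/-- Over a finite local ring `R` of odd characteristic, every non-degenerate
symmetric bilinear form on `Rⁿ` with matrix `B` is equivalent to a diagonal form with
diagonal entries `dᵢ = (-1)^(i+1)` for `i < n` (1-indexed; i.e. `(-1)^i` for a 0-indexed
`i < n - 1`) and last entry `(-1)^(n+1)·u`, where `u = 1` or `u` is a non-square unit. -/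
theorem stmt_9 (R : Type*) [CommRing R] [IsLocalRing R] [Fintype R]
    (hchar : Odd (ringChar R)) (n : ℕ) (hn : 0 < n)
    (B : Matrix (Fin n) (Fin n) R) (hsymm : B.IsSymm) (hnd : IsUnit B.det) :
    ∃ (P : Matrix (Fin n) (Fin n) R) (u : R), IsUnit P.det ∧
      (u = 1 ∨ (IsUnit u ∧ ¬ ∃ r : R, r ^ 2 = u)) ∧
      Pᵀ * B * P = Matrix.diagonal
        (fun i : Fin n => if (i : ℕ) = n - 1 then (-1 : R) ^ (i : ℕ) * u
                          else (-1 : R) ^ (i : ℕ)) := by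
  obtain ⟨u, hu, P, hP, hPB⟩ := exists_congruent_diagonal_update_mul
    (isUnit_two_of_odd_ringChar hchar) hsymm hnd (fun i => isUnit_neg_one.pow (i : ℕ))
    (⟨n - 1, by omega⟩ : Fin n)
  refine ⟨P, u, hP, hu, ?_⟩
  rw [hPB]
  congr 1
  funext i
  by_cases hi : (i : ℕ) = n - 1 <;> simp [Function.update_apply, Fin.ext_iff, hi]
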